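/- arXiv:1409.1842 — 5 statements merged into one kernel-verified Lean document; each statement's English description precedes it below -/
import Mathlib

section
/- The penalised minimal cost F satisfies the Optimal Partitioning recursion: for all t ≥ 1, F(t) = min over 0 ≤ τ < t of [F(τ) + C(y_{τ+1:t}) + β], where F(0) = -β and F(t) is defined as the minimum over all k ≥ 0 and all changepoint vectors 0 = τ_0 < τ_1 < ⋯ < τ_k < τ_{k+1} = t of ∑_{j=0}^{k} [C(y_{τ_j+1:τ_{j+1}}) + β] - β. -/
/-!
Cutting off the last segment `(τ_k, t]` of a segmentation of `y_{1:t}` leaves a segmentation of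
`y_{1:τ_k}` whose penalised cost is smaller by `C(τ_k, t) + β`; when `k = 0` nothing is left, and
the convention `F(0) = -β` makes the same formula hold. Conversely, appending the segment `(s, t]`
to any segmentation of `y_{1:s}` gives one of `y_{1:t}`. The first fact gives `min ≤ F(t)`, the
second `F(t) ≤ min`.
-/

def penalisedCosts (C : ℕ → ℕ → ℝ) (β : ℝ) (t : ℕ) : Set ℝ :=
  {x : ℝ | ∃ (k : ℕ) (τ : Fin (k + 2) → ℕ), StrictMono τ ∧ τ 0 = 0 ∧
    τ (Fin.last (k + 1)) = t ∧
    x = (∑ j : Fin (k + 1), (C (τ j.castSucc) (τ j.succ) + β)) - β}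

namespace penalisedCosts

variable {C : ℕ → ℕ → ℝ} {β : ℝ}

lemma cost_mem {t : ℕ} (ht : 0 < t) : C 0 t ∈ penalisedCosts C β t :=
  ⟨0, ![0, t], Fin.strictMono_iff_lt_succ.2 (by simpa using ht), rfl, rfl, by simp⟩

lemma add_cost_mem {s t : ℕ} {x : ℝ} (hst : s < t) (hx : x ∈ penalisedCosts C β s) :
    x + C s t + β ∈ penalisedCosts C β t := by
  obtain ⟨k, τ, hmono, h0, hlast, rfl⟩ := hx
  refine ⟨k + 1, Fin.snoc τ t, Fin.strictMono_iff_lt_succ.2 fun i => ?_, ?_, by simp, ?_⟩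
  · rcases Fin.eq_castSucc_or_eq_last i with ⟨j, rfl⟩ | rfl
    · simpa only [Fin.succ_castSucc, Fin.snoc_castSucc] using hmono (Fin.castSucc_lt_succ (i := j))
    · rwa [Fin.succ_last, Fin.snoc_castSucc, Fin.snoc_last, hlast]
  · simpa using h0
  · conv_rhs => rw [Fin.sum_univ_castSucc]
    simp only [Fin.succ_castSucc, Fin.snoc_castSucc, Fin.succ_last, Fin.snoc_last]
    rw [hlast]
    ring

lemma eq_cost_or_eq_add_cost {t : ℕ} {x : ℝ} (hx : x ∈ penalisedCosts C β t) :
    x = C 0 t ∨ ∃ s, 0 < s ∧ s < t ∧ ∃ y ∈ penalisedCosts C β s, x = y + C s t + β := by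
  obtain ⟨k, τ, hmono, h0, hlast, rfl⟩ := hx
  cases k with
  | zero => left; simp [h0, ← hlast]
  | succ k =>
    right
    refine ⟨τ (Fin.last (k + 1)).castSucc, ?_, ?_, _, ⟨k, Fin.init τ, ?_, h0, rfl, rfl⟩, ?_⟩
    · rw [← h0]; exact hmono (by simp [Fin.lt_def])
    · rw [← hlast]; exact hmono (Fin.castSucc_lt_last _)
    · exact hmono.comp Fin.strictMono_castSucc
    · rw [Fin.sum_univ_castSucc, Fin.succ_last, hlast]
      simp only [Fin.init, Fin.castSucc_succ]
      ring

end penalisedCosts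

open penalisedCosts in
/-- the penalised minimal cost F satisfies the Optimal Partitioning recursion. -/
theorem optimal_partitioning_recursion (C : ℕ → ℕ → ℝ) (β : ℝ) (F : ℕ → ℝ)
    (hF0 : F 0 = -β)
    (hF : ∀ t : ℕ, 1 ≤ t →
      IsLeast {x : ℝ | ∃ (k : ℕ) (τ : Fin (k + 2) → ℕ), StrictMono τ ∧ τ 0 = 0 ∧
        τ (Fin.last (k + 1)) = t ∧
        x = (∑ j : Fin (k + 1), (C (τ j.castSucc) (τ j.succ) + β)) - β} (F t)) :
    ∀ t : ℕ, ∀ ht : 1 ≤ t,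
      F t = (Finset.range t).inf' (Finset.nonempty_range_iff.mpr (by omega))
        (fun τ => F τ + C τ t + β) := by
  intro t ht
  obtain ⟨hFt_mem, hFt_le⟩ : IsLeast (penalisedCosts C β t) (F t) := hF t ht
  refine le_antisymm (Finset.le_inf' _ _ fun s hs => ?_) ?_
  · rw [Finset.mem_range] at hs
    rcases Nat.eq_zero_or_pos s with rfl | hs0
    · simpa [hF0] using hFt_le (cost_mem ht)
    · exact hFt_le (add_cost_mem hs (hF s hs0).1)
  · rcases eq_cost_or_eq_add_cost hFt_mem with hFt | ⟨s, hs0, hst, y, hy, hFt⟩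
    · calc _ ≤ F 0 + C 0 t + β := Finset.inf'_le _ (Finset.mem_range.2 ht)
        _ = F t := by rw [hF0, hFt]; ring
    · calc _ ≤ F s + C s t + β := Finset.inf'_le _ (Finset.mem_range.2 hst)
        _ ≤ F t := by rw [hFt]; linarith [(hF s hs0).2 hy]
end

section
/- SNIP pruning is valid (Theorem 1): assume condition C2 holds with constant κ. If, for k ≥ 1 and t < s, C_{k-1,t} + C(y_{t+1:s}) + κ > C_{k-1,s}, then for all T > s, C_{k-1,t} + C(y_{t+1:T}) > C_{k-1,s} + C(y_{s+1:T}); hence t cannot be the position of the last changepoint in any optimal segmentation of y_{1:T} with k changepoints. -/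
/-- validity of SNIP pruning (Theorem 1). -/
theorem snip_pruning_valid (C : ℕ → ℕ → ℝ) (κ : ℝ)
    (hC2 : ∀ t s T : ℕ, t < s → s < T → C t s + C s T + κ ≤ C t T)
    (Ck : ℕ → ℕ → ℝ) (k : ℕ) (hk : 1 ≤ k)
    (hrec : ∀ T : ℕ, k + 1 ≤ T →
      IsLeast {x : ℝ | ∃ τ : ℕ, k ≤ τ ∧ τ < T ∧ x = Ck (k - 1) τ + C τ T} (Ck k T))
    (t s : ℕ) (hkt : k ≤ t) (hts : t < s)
    (hprune : Ck (k - 1) s < Ck (k - 1) t + C t s + κ) :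
    ∀ T : ℕ, s < T →
      (Ck (k - 1) s + C s T < Ck (k - 1) t + C t T) ∧
      Ck k T < Ck (k - 1) t + C t T := by
  intro T hsT
  have h1 : Ck (k - 1) s + C s T < Ck (k - 1) t + C t T := by
    have := hC2 t s T hts hsT
    linarith
  refine ⟨h1, ?_⟩
  have hks : k ≤ s := le_of_lt (lt_of_le_of_lt hkt hts)
  have hT : k + 1 ≤ T := lt_of_le_of_lt hks hsT
  have hle : Ck k T ≤ Ck (k - 1) s + C s T :=
    (hrec T hT).2 ⟨s, hks, hsT, rfl⟩
  linarith
end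

section
/- The functional cost recursion for FPOP holds: defining Cost*_t(μ) = min over 0 ≤ τ ≤ t of Cost^τ_t(μ), where Cost^τ_t(μ) = F(τ) + β + ∑_{i=τ+1}^{t} γ(y_i, μ) for τ < t and Cost^t_t(μ) = F(t) + β, one has Cost*_t(μ) = min{ Cost*_{t-1}(μ) + γ(y_t, μ), F(t) + β } for all t ≥ 1 and all μ. -/
/-!
Every candidate cost `Cost^τ_t` with `τ < t` is the candidate `Cost^τ_{t-1}` plus the single
new term `γ(y_t, μ)` (for `τ = t - 1` because the empty sum vanishes), and adding a constant
commutes with a finite minimum. The only candidate of `Cost*_t` not of this form is the fresh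
change point `τ = t`, of cost `F(t) + β`.
-/

/-- The FPOP candidate cost function `Cost^τ_t(μ)`. -/
noncomputable def fpopCost (y : ℕ → ℝ) (γ : ℝ → ℝ → ℝ) (β : ℝ) (F : ℕ → ℝ)
    (τ t : ℕ) (μ : ℝ) : ℝ :=
  if τ = t then F t + β else F τ + β + ∑ i ∈ Finset.Ioc τ t, γ (y i) μ

/-- `Cost*_t(μ) = min over 0 ≤ τ ≤ t of Cost^τ_t(μ)`. -/
noncomputable def fpopCostStar (y : ℕ → ℝ) (γ : ℝ → ℝ → ℝ) (β : ℝ) (F : ℕ → ℝ)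
    (t : ℕ) (μ : ℝ) : ℝ :=
  (Finset.range (t + 1)).inf' (Finset.nonempty_range_iff.mpr (Nat.succ_ne_zero t))
    (fun τ => fpopCost y γ β F τ t μ)

open Finset

section

variable (y : ℕ → ℝ) (γ : ℝ → ℝ → ℝ) (β : ℝ) (F : ℕ → ℝ)

theorem fpopCost_self (t : ℕ) (μ : ℝ) : fpopCost y γ β F t t μ = F t + β :=
  if_pos rfl

theorem fpopCost_succ {τ t : ℕ} (hτ : τ ≤ t) (μ : ℝ) :
    fpopCost y γ β F τ (t + 1) μ = fpopCost y γ β F τ t μ + γ (y (t + 1)) μ := by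
  rw [fpopCost, if_neg (by omega), sum_Ioc_succ_top hτ, ← add_assoc]
  rcases hτ.eq_or_lt with rfl | hlt
  · rw [fpopCost_self, Ioc_self, sum_empty, add_zero]
  · rw [fpopCost, if_neg hlt.ne]

theorem fpopCostStar_succ (t : ℕ) (μ : ℝ) :
    fpopCostStar y γ β F (t + 1) μ =
      min (fpopCostStar y γ β F t μ + γ (y (t + 1)) μ) (F (t + 1) + β) := by
  have hne : (range (t + 1)).Nonempty := nonempty_range_add_one
  calc fpopCostStar y γ β F (t + 1) μ
      = min (fpopCost y γ β F (t + 1) (t + 1) μ)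
          ((range (t + 1)).inf' hne fun τ => fpopCost y γ β F τ (t + 1) μ) := by
        rw [fpopCostStar, inf'_congr _ range_add_one fun _ _ => rfl, inf'_insert hne]
    _ = min ((range (t + 1)).inf' hne fun τ => fpopCost y γ β F τ t μ + γ (y (t + 1)) μ)
          (F (t + 1) + β) := by
        rw [min_comm, fpopCost_self,
          inf'_congr hne rfl fun τ hτ => fpopCost_succ y γ β F (mem_range_succ_iff.mp hτ) μ]
    _ = _ := by
        rw [fpopCostStar]
        congr 1
        exact (map_finset_inf' (OrderIso.addRight (γ (y (t + 1)) μ)) hne _).symm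

end

/-- the FPOP functional cost recursion. -/
theorem fpop_functional_recursion (y : ℕ → ℝ) (γ : ℝ → ℝ → ℝ) (β : ℝ)
    (F : ℕ → ℝ) :
    ∀ t : ℕ, 1 ≤ t → ∀ μ : ℝ,
      fpopCostStar y γ β F t μ =
        min (fpopCostStar y γ β F (t - 1) μ + γ (y t) μ) (F t + β) := by
  intro t ht μ
  obtain ⟨n, rfl⟩ := Nat.exists_eq_add_of_le' ht
  exact fpopCostStar_succ y γ β F n μ
end

section
/- Functional pruning dominates inequality based pruning in the constrained case: if C_{k-1,τ} + C(y_{τ+1:t}) > C_{k-1,t}, then Cost^τ_{k,t}(μ) > C_{k-1,t} for all μ, so the set I^τ_{k,t} = {μ : Cost^τ_{k,t}(μ) ≤ C_{k-1,t}} is empty, and therefore τ is pruned by the pDPA functional pruning at time t. -/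
/-- The pDPA candidate cost function `Cost^τ_{k,t}(μ)`. -/
noncomputable def pdpaCost (y : ℕ → ℝ) (γ : ℝ → ℝ → ℝ) (Ck : ℕ → ℕ → ℝ)
    (k τ t : ℕ) (μ : ℝ) : ℝ :=
  if τ = t then Ck (k - 1) t else Ck (k - 1) τ + ∑ i ∈ Finset.Ioc τ t, γ (y i) μ

/-- `Cost*_{k,t}(μ) = min over k ≤ τ ≤ t of Cost^τ_{k,t}(μ)` (junk value 0 if t < k). -/
noncomputable def pdpaCostStar (y : ℕ → ℝ) (γ : ℝ → ℝ → ℝ) (Ck : ℕ → ℕ → ℝ)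
    (k t : ℕ) (μ : ℝ) : ℝ :=
  if h : k ≤ t then
    (Finset.Icc k t).inf' (Finset.nonempty_Icc.mpr h) (fun τ => pdpaCost y γ Ck k τ t μ)
  else 0

/-- `Set^τ_{k,t} = {μ : Cost^τ_{k,t}(μ) = Cost*_{k,t}(μ)}`. -/
noncomputable def pdpaSet (y : ℕ → ℝ) (γ : ℝ → ℝ → ℝ) (Ck : ℕ → ℕ → ℝ)
    (k τ t : ℕ) : Set ℝ :=
  {μ | pdpaCost y γ Ck k τ t μ = pdpaCostStar y γ Ck k t μ}

/-- `I^τ_{k,t} = {μ : Cost^τ_{k,t}(μ) ≤ C_{k-1,t}}`. -/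
noncomputable def pdpaI (y : ℕ → ℝ) (γ : ℝ → ℝ → ℝ) (Ck : ℕ → ℕ → ℝ)
    (k τ t : ℕ) : Set ℝ :=
  {μ | pdpaCost y γ Ck k τ t μ ≤ Ck (k - 1) t}

/-- functional pruning dominates inequality based pruning in the
constrained case: a candidate pruned by the SNIP inequality has empty `I^τ_{k,t}`,
hence empty `Set^τ_{k,t}`, so it is pruned by pDPA's functional pruning. -/
theorem functional_dominates_inequality_constrained (y : ℕ → ℝ) (γ : ℝ → ℝ → ℝ)
    (C : ℕ → ℕ → ℝ)
    (hC : ∀ τ t : ℕ, τ < t →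
      IsLeast {x : ℝ | ∃ μ : ℝ, x = ∑ i ∈ Finset.Ioc τ t, γ (y i) μ} (C τ t))
    (Ck : ℕ → ℕ → ℝ) (hCk0 : ∀ t : ℕ, 1 ≤ t → Ck 0 t = C 0 t)
    (hrec : ∀ k T : ℕ, ∀ hk : 1 ≤ k, ∀ hT : k + 1 ≤ T,
      Ck k T = (Finset.Ico k T).inf' (Finset.nonempty_Ico.mpr (by omega))
        (fun τ => Ck (k - 1) τ + C τ T))
    (k τ t : ℕ) (hk : 1 ≤ k) (hτ : k ≤ τ) (hτt : τ < t)
    (hineq : Ck (k - 1) t < Ck (k - 1) τ + C τ t) :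
    (∀ μ : ℝ, Ck (k - 1) t < Ck (k - 1) τ + ∑ i ∈ Finset.Ioc τ t, γ (y i) μ) ∧
    pdpaI y γ Ck k τ t = ∅ ∧ pdpaSet y γ Ck k τ t = ∅ := by
  have hne : τ ≠ t := Nat.ne_of_lt hτt
  have key : ∀ μ : ℝ, Ck (k - 1) t < Ck (k - 1) τ + ∑ i ∈ Finset.Ioc τ t, γ (y i) μ := by
    intro μ
    have hle : C τ t ≤ ∑ i ∈ Finset.Ioc τ t, γ (y i) μ :=
      (hC τ t hτt).2 ⟨μ, rfl⟩
    linarith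
  refine ⟨key, ?_, ?_⟩
  · ext μ
    simp only [pdpaI, Set.mem_setOf_eq, Set.mem_empty_iff_false, iff_false, not_le,
      pdpaCost, if_neg hne]
    exact key μ
  · ext μ
    simp only [pdpaSet, Set.mem_setOf_eq, Set.mem_empty_iff_false, iff_false]
    intro h
    have hkt : k ≤ t := le_of_lt (lt_of_le_of_lt hτ hτt)
    have hstar : pdpaCostStar y γ Ck k t μ ≤ pdpaCost y γ Ck k t t μ := by
      rw [pdpaCostStar, dif_pos hkt]
      exact Finset.inf'_le _ (Finset.mem_Icc.mpr ⟨hkt, le_refl t⟩)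
    rw [pdpaCost, if_pos rfl] at hstar
    have := key μ
    rw [pdpaCost, if_neg hne] at h
    linarith
end

section
/- The pDPA functional recursion holds: Cost*_{k,t}(μ) = min{ Cost*_{k,t-1}(μ) + γ(y_t, μ), C_{k-1,t} }, where Cost*_{k,t}(μ) = min over k ≤ τ ≤ t of Cost^τ_{k,t}(μ), with Cost^τ_{k,t}(μ) = C_{k-1,τ} + ∑_{i=τ+1}^{t} γ(y_i, μ) for τ < t and Cost^t_{k,t}(μ) = C_{k-1,t}. -/
/-! Every candidate `Cost^τ_{k,t}` with `τ < t` is the candidate `Cost^τ_{k,t-1}` plus the one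
new term `γ(y_t, μ)`, and adding a constant commutes with a minimum, so only the new candidate
`τ = t` has to be split off the minimum. -/

theorem Finset.inf'_Icc_add_one_right {α : Type*} [SemilatticeInf α] (f : ℕ → α) {a b : ℕ}
    (h : a ≤ b) :
    (Finset.Icc a (b + 1)).inf' (Finset.nonempty_Icc.mpr (by omega)) f =
      (Finset.Icc a b).inf' (Finset.nonempty_Icc.mpr h) f ⊓ f (b + 1) := by
  rw [Finset.inf'_congr _ (Finset.insert_Icc_right_eq_Icc_add_one (by omega)).symm fun _ _ ↦ rfl,
    Finset.inf'_insert, inf_comm]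

section

variable (y : ℕ → ℝ) (γ : ℝ → ℝ → ℝ) (Ck : ℕ → ℕ → ℝ) (k : ℕ) (μ : ℝ)

lemma pdpaCost_self (t : ℕ) : pdpaCost y γ Ck k t t μ = Ck (k - 1) t := if_pos rfl

lemma pdpaCost_add_one_right {τ t : ℕ} (hτ : τ ≤ t) :
    pdpaCost y γ Ck k τ (t + 1) μ = pdpaCost y γ Ck k τ t μ + γ (y (t + 1)) μ := by
  rw [pdpaCost, if_neg (by omega), Finset.sum_Ioc_succ_top hτ, pdpaCost]
  split_ifs with h
  · rw [h, Finset.Ioc_self, Finset.sum_empty, zero_add]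
  · rw [add_assoc]

lemma pdpaCostStar_add_one {t : ℕ} (hk : k ≤ t) :
    pdpaCostStar y γ Ck k (t + 1) μ =
      min (pdpaCostStar y γ Ck k t μ + γ (y (t + 1)) μ) (Ck (k - 1) (t + 1)) := by
  rw [pdpaCostStar, dif_pos (by omega), pdpaCostStar, dif_pos hk,
    Finset.inf'_Icc_add_one_right _ hk, pdpaCost_self]
  congr 1
  rw [← OrderIso.addRight_apply (γ (y (t + 1)) μ), map_finset_inf']
  exact Finset.inf'_congr _ rfl fun τ hτ ↦
    pdpaCost_add_one_right y γ Ck k μ (Finset.mem_Icc.mp hτ).2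

end

/-- the pDPA functional recursion. -/
theorem pdpa_functional_recursion (y : ℕ → ℝ) (γ : ℝ → ℝ → ℝ)
    (Ck : ℕ → ℕ → ℝ)
    : ∀ k t : ℕ, 1 ≤ k → k + 1 ≤ t → ∀ μ : ℝ,
      pdpaCostStar y γ Ck k t μ =
        min (pdpaCostStar y γ Ck k (t - 1) μ + γ (y t) μ) (Ck (k - 1) t) := by
  rintro k (_ | t) - ht μ
  · omega
  · exact pdpaCostStar_add_one y γ Ck k μ (by omega)
end
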